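/- arXiv:2001.06515 — 5 statements merged into one kernel-verified Lean document; each statement's English description precedes it below -/
import Mathlib

section
/- A prime p divides every multinomial coefficient ℓ!/(k_1!⋯k_m!) with k_1+⋯+k_m = ℓ and each k_j < ℓ if and only if ℓ is a power of p (with positive exponent). -/
private lemma aux_lucas_pow (p : ℕ) (hp : p.Prime) :
    ∀ ℓ, 2 ≤ ℓ → (∀ a, 0 < a → a < ℓ → p ∣ Nat.choose ℓ a) →
      ∃ r : ℕ, 0 < r ∧ ℓ = p ^ r := by
  haveI : Fact p.Prime := ⟨hp⟩
  intro ℓ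
  induction ℓ using Nat.strong_induction_on with
  | _ ℓ ih =>
    intro hℓ h
    have hpl : p ∣ ℓ := by
      have := h 1 one_pos (by omega)
      simpa using this
    obtain ⟨q, hq⟩ := hpl
    have hp2 := hp.two_le
    have hq1 : 1 ≤ q := by nlinarith
    rcases eq_or_lt_of_le hq1 with hq1 | hq2
    · exact ⟨1, one_pos, by rw [pow_one, hq, ← hq1, mul_one]⟩
    · -- q ≥ 2
      have key : ∀ b, 0 < b → b < q → p ∣ Nat.choose q b := by
        intro b hb hbq
        have hab : p * b < ℓ := by rw [hq]; nlinarith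
        have hdvd := h (p * b) (by positivity) hab
        have hmod := Choose.choose_modEq_choose_mod_mul_choose_div_nat
          (n := ℓ) (k := p * b) (p := p)
        have hl0 : ℓ % p = 0 := by simp [hq]
        have hb0 : (p * b) % p = 0 := Nat.mul_mod_right p b
        have hld : ℓ / p = q := by rw [hq]; exact Nat.mul_div_cancel_left q (by omega)
        have hbd : (p * b) / p = b := Nat.mul_div_cancel_left b (by omega)
        rw [hl0, hb0, hld, hbd, Nat.choose_self, one_mul] at hmod
        have := (Nat.modEq_zero_iff_dvd.mpr hdvd).symm.trans hmod
        exact Nat.modEq_zero_iff_dvd.mp this.symm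
      have hql : q < ℓ := by nlinarith
      obtain ⟨s, hs, rfl⟩ := ih q hql hq2 key
      exact ⟨s + 1, by omega, by rw [hq, pow_succ, mul_comm]⟩

/-- A prime `p` divides every multinomial coefficient `ℓ!/(k_1!⋯k_m!)` with
`k_1+⋯+k_m = ℓ` and each `k_j < ℓ` if and only if `ℓ` is a power of `p`
(with positive exponent). -/
theorem multinomial_prime_dvd_iff_prime_pow (p ℓ : ℕ) (hp : p.Prime) (hℓ : 2 ≤ ℓ) :
    (∀ (m : ℕ) (k : Fin m → ℕ), (∑ j, k j = ℓ) → (∀ j, k j < ℓ) →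
      p ∣ Nat.multinomial Finset.univ k) ↔ ∃ r : ℕ, 0 < r ∧ ℓ = p ^ r := by
  constructor
  · intro h
    apply aux_lucas_pow p hp ℓ hℓ
    intro a ha haℓ
    have hsum : ∑ j, (![a, ℓ - a] : Fin 2 → ℕ) j = ℓ := by
      simp [Fin.sum_univ_two]; omega
    have hlt : ∀ j, (![a, ℓ - a] : Fin 2 → ℕ) j < ℓ := by
      intro j; fin_cases j <;> simp <;> omega
    have := h 2 ![a, ℓ - a] hsum hlt
    have huniv : (Finset.univ : Finset (Fin 2)) = insert 0 {1} := by decide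
    rw [huniv, Nat.binomial_eq_choose (by decide)] at this
    simpa [Nat.add_sub_cancel' (le_of_lt haℓ)] using this
  · rintro ⟨r, hr, rfl⟩ m k hsum hlt
    have h0 : ∃ j, k j ≠ 0 := by
      by_contra hc
      push_neg at hc
      simp [hc] at hsum
      omega
    obtain ⟨j, hj⟩ := h0
    have huniv : (Finset.univ : Finset (Fin m)) = insert j (Finset.univ.erase j) := by
      rw [Finset.insert_erase (Finset.mem_univ j)]
    have := Nat.multinomial_insert (s := Finset.univ.erase j) (a := j)
      (Finset.notMem_erase j _) k
    rw [← huniv] at this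
    have hsum' : k j + ∑ i ∈ Finset.univ.erase j, k i = p ^ r := by
      rw [← hsum, ← Finset.sum_insert (Finset.notMem_erase j _), ← huniv]
    rw [this, hsum']
    exact Dvd.dvd.mul_right (hp.dvd_choose_pow hj (Nat.ne_of_lt (hlt j))) _
end

section
/- Fix n ≥ 2 and work in coordinates [b_1:⋯:b_{n−1}] on the hyperplane T_1. For the radical polynomial x^n + a (i.e., a_1 = ⋯ = a_{n−1} = 0, a_n = a), the second Tschirnhaus form T_{12}(a) equals −2na·Σ_{i=1}^{(n−1)/2} b_i b_{n−i} when n is odd, and −na·(b_{n/2}² + 2Σ_{i=1}^{n/2−1} b_i b_{n−i}) when n is even. -/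
/-!
The degree-2 form is the image of `q² = (Σ_{j<n} b_j X^j)²` under the linear functional
`X^m ↦ p_m`; expanding `q²` once by the multinomial theorem and once as `q · q` turns it into
`Σ_{i,j<n} b_i b_j p_{i+j}`. For `x^n + a` the only power sum with index in `(0, 2n)` that
survives is `p_n = −na`, and `b_0 = 0` removes index `0`, leaving `−na Σ_{0<i<n} b_i b_{n−i}`;
the involution `i ↦ n − i` folds this sum in half, with the fixed point `n/2` when `n` is even.
-/

open Finset Polynomial

theorem sum_antidiagonalTuple_two_eq_sum_range_sum_range {R : Type*} [CommSemiring R]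
    (n : ℕ) (f b : ℕ → R) :
    ∑ κ ∈ Finset.Nat.antidiagonalTuple n 2,
        (Nat.multinomial univ κ : R) * f (∑ j : Fin n, (j : ℕ) * κ j) * ∏ j : Fin n, b j ^ κ j =
      ∑ i ∈ range n, ∑ j ∈ range n, b i * b j * f (i + j) := by
  let L : R[X] →ₗ[R] R := lsum fun m => LinearMap.mulRight R (f m)
  have hL : ∀ c m, L (C c * X ^ m) = c * f m := fun c m => by
    simp [L, C_mul_X_pow_eq_monomial, sum_monomial_index]
  let q : R[X] := ∑ j : Fin n, C (b j) * X ^ (j : ℕ)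
  have hmultinomial : L (q ^ 2) = ∑ κ ∈ Finset.Nat.antidiagonalTuple n 2,
      (Nat.multinomial univ κ : R) * f (∑ j : Fin n, (j : ℕ) * κ j) * ∏ j : Fin n, b j ^ κ j := by
    have hset : Finset.Nat.antidiagonalTuple n 2 = piAntidiag univ 2 := by
      ext κ; simp [Finset.Nat.mem_antidiagonalTuple, mem_piAntidiag]
    rw [sum_pow_eq_sum_piAntidiag, ← hset, map_sum]
    refine sum_congr rfl fun κ _ => ?_
    simp_rw [mul_pow, prod_mul_distrib, ← pow_mul, prod_pow_eq_pow_sum, ← C_pow, ← map_prod,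
      ← C_eq_natCast, ← mul_assoc, ← C_mul, hL, mul_comm _ (κ _)]
    ring
  have hpairs : L (q ^ 2) = ∑ i ∈ range n, ∑ j ∈ range n, b i * b j * f (i + j) := by
    rw [sq, sum_mul_sum]
    simp_rw [map_sum, mul_mul_mul_comm _ (X ^ _), ← C_mul, ← pow_add, hL]
    rw [← Fin.sum_univ_eq_sum_range]
    exact sum_congr rfl fun i _ => Fin.sum_univ_eq_sum_range (fun j => b i * b j * f (i + j)) n
  rw [← hmultinomial, hpairs]

section Radical

variable {R : Type*} [CommRing R] {n : ℕ} {a : R} {p : ℕ → R}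

theorem radical_powerSum_eq_ite
    (hp : ∀ m : ℕ, p m = if n ∣ m then (n : R) * (-a) ^ (m / n) else 0) {m : ℕ} (hm0 : m ≠ 0)
    (hm : m < 2 * n) : p m = if m = n then (n : R) * -a else 0 := by
  rw [hp]
  by_cases hmn : m = n
  · subst hmn
    rw [if_pos dvd_rfl, if_pos rfl, Nat.div_self (by omega), pow_one]
  · rw [if_neg hmn, if_neg fun hdvd => hmn (Nat.eq_of_dvd_of_lt_two_mul hm0 hdvd hm)]

theorem sum_range_sum_range_mul_radical_powerSum (b : ℕ → R) (hb0 : b 0 = 0)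
    (hp : ∀ m : ℕ, p m = if n ∣ m then (n : R) * (-a) ^ (m / n) else 0) :
    ∑ i ∈ range n, ∑ j ∈ range n, b i * b j * p (i + j) =
      (n : R) * -a * ∑ i ∈ Ioo 0 n, b i * b (n - i) := by
  have hinner : ∀ i ∈ Ioo 0 n, ∑ j ∈ range n, b i * b j * p (i + j) =
      (n : R) * -a * (b i * b (n - i)) := by
    intro i hi
    rw [mem_Ioo] at hi
    have hterm : ∀ j ∈ range n, b i * b j * p (i + j) =
        if n - i = j then (n : R) * -a * (b i * b (n - i)) else 0 := by
      intro j hj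
      rw [mem_range] at hj
      rw [radical_powerSum_eq_ite hp (by omega) (by omega)]
      by_cases hij : n - i = j
      · rw [if_pos (by omega), if_pos hij, hij]; ring
      · rw [if_neg (by omega), if_neg hij, mul_zero]
    rw [sum_congr rfl hterm, sum_ite_eq, if_pos (mem_range.2 (by omega))]
  have hzero : ∀ i ∈ range n, i ∉ Ioo 0 n → ∑ j ∈ range n, b i * b j * p (i + j) = 0 := by
    intro i hi hi'
    obtain rfl : i = 0 := by simp only [mem_range, mem_Ioo] at hi hi'; omega
    simp [hb0]
  rw [← sum_subset (fun i hi => mem_range.2 (mem_Ioo.1 hi).2) hzero, sum_congr rfl hinner,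
    mul_sum]

end Radical

section Fold

variable {M : Type*} [AddCommMonoid M] {n : ℕ} {f : ℕ → M}

theorem sum_Ioo_eq_two_nsmul_add_of_symm (hf : ∀ i ≤ n, f (n - i) = f i) {m : ℕ}
    (hm : 2 * m < n) :
    ∑ i ∈ Ioo 0 n, f i = 2 • ∑ i ∈ Icc 1 m, f i + ∑ i ∈ Ioo m (n - m), f i := by
  have hreflect : ∑ i ∈ Ico (n - m) n, f i = ∑ i ∈ Icc 1 m, f i := by
    calc ∑ i ∈ Ico (n - m) n, f i = ∑ i ∈ Ico (n - m) n, f (n - i) :=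
          sum_congr rfl fun i hi => (hf i (mem_Ico.1 hi).2.le).symm
      _ = ∑ i ∈ Ico (n + 1 - n) (n + 1 - (n - m)), f i := sum_Ico_reflect f _ (Nat.le_succ n)
      _ = ∑ i ∈ Icc 1 m, f i := by
          rw [show n + 1 - n = 1 by omega, show n + 1 - (n - m) = m + 1 by omega,
            Ico_add_one_right_eq_Icc]
  rw [← Ico_add_one_left_eq_Ioo, zero_add, ← sum_Ico_consecutive f (by omega : 1 ≤ m + 1)
    (by omega : m + 1 ≤ n), ← sum_Ico_consecutive f (by omega : m + 1 ≤ n - m)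
    (by omega : n - m ≤ n), hreflect, Ico_add_one_right_eq_Icc, Ico_add_one_left_eq_Ioo,
    two_nsmul]
  abel

theorem sum_Ioo_eq_two_nsmul_of_symm_of_odd (hf : ∀ i ≤ n, f (n - i) = f i) (hn : n % 2 = 1) :
    ∑ i ∈ Ioo 0 n, f i = 2 • ∑ i ∈ Icc 1 ((n - 1) / 2), f i := by
  rw [sum_Ioo_eq_two_nsmul_add_of_symm hf (m := (n - 1) / 2) (by omega),
    show n - (n - 1) / 2 = (n - 1) / 2 + 1 by omega, ← Ico_add_one_left_eq_Ioo, Ico_self,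
    sum_empty, add_zero]

theorem sum_Ioo_eq_add_two_nsmul_of_symm_of_even (hf : ∀ i ≤ n, f (n - i) = f i)
    (hn : n % 2 = 0) (hn0 : n ≠ 0) :
    ∑ i ∈ Ioo 0 n, f i = f (n / 2) + 2 • ∑ i ∈ Icc 1 (n / 2 - 1), f i := by
  rw [sum_Ioo_eq_two_nsmul_add_of_symm hf (m := n / 2 - 1) (by omega), add_comm,
    show n - (n / 2 - 1) = n / 2 + 1 by omega, ← Ico_add_one_left_eq_Ioo,
    show n / 2 - 1 + 1 = n / 2 by omega, Ico_add_one_right_eq_Icc, Icc_self, sum_singleton]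

end Fold

/-- For the radical polynomial `x^n + a`, whose power sums are `p_m = n·(−a)^{m/n}` when
`n ∣ m` and `0` otherwise, the degree-2 Tschirnhaus form
`T_2 = Σ_{|κ|=2} (2 choose κ) p_{||κ||} b^κ` restricted to the hyperplane `T_1 = {b_0 = 0}`
equals `−2na·Σ_{i=1}^{(n−1)/2} b_i b_{n−i}` when `n` is odd, and
`−na·(b_{n/2}² + 2 Σ_{i=1}^{n/2−1} b_i b_{n−i})` when `n` is even. -/
theorem tschirnhaus_quadric_radical (R : Type*) [CommRing R] (n : ℕ) (hn : 2 ≤ n)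
    (a : R) (b : ℕ → R) (hb0 : b 0 = 0) (p : ℕ → R)
    (hp : ∀ m : ℕ, p m = if n ∣ m then (n : R) * (-a) ^ (m / n) else 0) :
    (∑ κ ∈ Finset.Nat.antidiagonalTuple n 2,
        (Nat.multinomial Finset.univ κ : R) * p (∑ j : Fin n, (j : ℕ) * κ j) *
          ∏ j : Fin n, b (j : ℕ) ^ κ j) =
      if n % 2 = 1 then
        -2 * (n : R) * a * ∑ i ∈ Finset.Icc 1 ((n - 1) / 2), b i * b (n - i)
      else
        -(n : R) * a * (b (n / 2) ^ 2 + 2 * ∑ i ∈ Finset.Icc 1 (n / 2 - 1), b i * b (n - i)) := by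
  have hsymm : ∀ i ≤ n, b (n - i) * b (n - (n - i)) = b i * b (n - i) := fun i hi => by
    rw [Nat.sub_sub_self hi, mul_comm]
  rw [sum_antidiagonalTuple_two_eq_sum_range_sum_range,
    sum_range_sum_range_mul_radical_powerSum b hb0 hp]
  split_ifs with hodd
  · rw [sum_Ioo_eq_two_nsmul_of_symm_of_odd hsymm hodd, nsmul_eq_mul]
    push_cast
    ring
  · rw [sum_Ioo_eq_add_two_nsmul_of_symm_of_even hsymm (by omega) (by omega), nsmul_eq_mul,
      show n - n / 2 = n / 2 by omega]
    push_cast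
    ring
end

section
/- For each fixed d ≥ 2, ψ(d,k)_i grows polynomially in k of degree (d−1)(d−2)⋯(d−i) = (d−1)!/(d−i−1)!; consequently dim M_{3,ψ(d,k)_{d−2}} grows polynomially in k (of degree 3(d−1)!), while (d+k)!/d! grows superexponentially, so for each d there exists K_d such that for all k ≥ K_d, Φ(d,k) = (d+k)!/d! + 1. -/
lemma choose_le_pow' (n r : ℕ) : n.choose r ≤ n ^ r := by
  rw [Nat.choose_eq_descFactorial_div_factorial]
  exact le_trans (Nat.div_le_self _ _) (Nat.descFactorial_le_pow _ _)

lemma poly_le_exp (c D : ℕ) : ∃ K : ℕ, ∀ k : ℕ, K ≤ k → (k + c) ^ D ≤ 3 ^ k := by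
  have h := isLittleO_pow_const_const_pow_of_one_lt (R := ℝ) D (show (1:ℝ) < 3 by norm_num)
  have h2 := h.def (show (0:ℝ) < ((3:ℝ)^c)⁻¹ by positivity)
  rw [Filter.eventually_atTop] at h2
  obtain ⟨N, hN⟩ := h2
  refine ⟨N, fun k hk => ?_⟩
  have := hN (k + c) (by omega)
  have h3 : ((k+c:ℕ):ℝ) ^ D ≤ ((3:ℝ)^c)⁻¹ * (3:ℝ) ^ (k+c) := by
    have habs : |((k:ℝ) + c)| = (k:ℝ) + c := abs_of_nonneg (by positivity)
    simpa [Real.norm_eq_abs, habs] using this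
  have h4 : ((k+c:ℕ):ℝ) ^ D ≤ (3:ℝ) ^ k := by
    rw [pow_add] at h3
    refine h3.trans (le_of_eq ?_)
    field_simp
  exact_mod_cast h4


/-- The sequence `ψ(d,k)_i` of Wolfson: `ψ(d,k)_0 = k`,
`ψ(d,k)_{i+1} = ⌈ψ(d,k)_i + C(ψ(d,k)_i + d − i, ψ(d,k)_i)/(ψ(d,k)_i + 1)⌉` for `0 ≤ i < d−2`,
and `ψ(d,k)_{d−1} = 2ψ(d,k)_{d−2} + 1` (the ceiling is implemented via rounded-up natural
division `⌈a/b⌉ = (a + b − 1)/b`). -/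
def psi (d k : ℕ) : ℕ → ℕ
  | 0 => k
  | i + 1 =>
    if i + 1 = d - 1 then 2 * psi d k i + 1
    else psi d k i + (Nat.choose (psi d k i + (d - i)) (psi d k i) + psi d k i) / (psi d k i + 1)

/-- `dim M_{3,N} = max{0, C(N+3,3) − (N+1)²}`, the dimension of the moduli space of smooth
cubic hypersurfaces in `P^N` (natural-number subtraction implements the truncation at 0). -/
def dimM (N : ℕ) : ℕ := Nat.choose (N + 3) 3 - (N + 1) ^ 2

/-- `Φ(d,k) = max{(d+k)!/d! + 1, dim M_{3,ψ(d,k)_{d−2}} + d + k + 1}`. -/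
def Phi (d k : ℕ) : ℕ :=
  max ((d + k).factorial / d.factorial + 1) (dimM (psi d k (d - 2)) + d + k + 1)

/-- Wolfson's bound function `FW`: `FW(r) = r + 1` for `r ≤ 3` and
`FW(r) = 2⌊(min_{d+k+1=r, d≥2, k≥1} Φ(d,k))/2⌋ + 1` for `r ≥ 4`. -/
noncomputable def FW (r : ℕ) : ℕ :=
  if r ≤ 3 then r + 1
  else 2 * (sInf {m | ∃ d k : ℕ, 2 ≤ d ∧ 1 ≤ k ∧ d + k + 1 = r ∧ m = Phi d k} / 2) + 1



lemma psi_le (d k : ℕ) (hd : 2 ≤ d) : ∀ i, psi d k i ≤ (k + d + 2) ^ ((2*d+2)^i) := by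
  intro i
  induction i with
  | zero => simp only [psi, pow_zero, pow_one]; omega
  | succ i ih =>
    set B := k + d + 2 with hB
    have hB4 : 4 ≤ B := by omega
    set p := psi d k i with hp
    set E := (2*d+2)^i with hE
    have hE1 : 1 ≤ E := Nat.one_le_pow _ _ (by omega)
    have hM : B ≤ B ^ E := Nat.le_self_pow (by omega) B
    have hstep : psi d k (i+1) ≤ 3 * (p + B) ^ d := by
      have hbase : p + B ≤ (p + B) ^ d := Nat.le_self_pow (by omega) _
      rw [psi]
      split
      · rw [← hp]; omega
      · rw [← hp]
        have hc : Nat.choose (p + (d - i)) p ≤ (p + B) ^ d := by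
          have h1 : (p + (d-i)).choose p = (p + (d-i)).choose (d-i) := by
            have := Nat.choose_symm (Nat.le_add_left (d-i) p)
            simpa using this
          calc (p + (d-i)).choose p ≤ (p + (d-i)) ^ (d-i) := h1 ▸ choose_le_pow' _ _
            _ ≤ (p + B) ^ (d-i) := Nat.pow_le_pow_left (by omega) _
            _ ≤ (p + B) ^ d := Nat.pow_le_pow_right (by omega) (by omega)
        have hdiv : (Nat.choose (p + (d - i)) p + p) / (p + 1) ≤ Nat.choose (p + (d-i)) p + p :=
          Nat.div_le_self _ _
        omega
    refine hstep.trans ?_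
    calc 3 * (p + B) ^ d ≤ 3 * (B ^ E * B) ^ d := by
          refine Nat.mul_le_mul_left _ (Nat.pow_le_pow_left ?_ _)
          have : p + B ≤ B ^ E + B := by omega
          refine this.trans (Nat.add_le_mul ?_ (by omega))
          exact le_trans (by omega) hM
      _ = 3 * B ^ (E * d + d) := by rw [← pow_succ, ← pow_mul]; ring_nf
      _ ≤ B ^ (E * d + d + 1) := by
          rw [pow_succ]
          have h0 : 1 ≤ B ^ (E*d+d) := Nat.one_le_pow _ _ (by omega)
          nlinarith
      _ ≤ B ^ ((2*d+2)^(i+1)) := by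
          refine Nat.pow_le_pow_right (by omega) ?_
          have : (2*d+2)^(i+1) = E * (2*d+2) := by rw [pow_succ]
          nlinarith

lemma fact_bound (d : ℕ) (hd : 2 ≤ d) : ∀ k, d.factorial * 3 ^ k ≤ (d + k).factorial := by
  intro k
  induction k with
  | zero => simp
  | succ k ih =>
    have : (d + (k+1)).factorial = (d + k + 1) * (d + k).factorial := by
      rw [show d + (k+1) = (d+k) + 1 by ring, Nat.factorial_succ]
    rw [this, pow_succ]
    calc d.factorial * (3 ^ k * 3) = 3 * (d.factorial * 3 ^ k) := by ring
      _ ≤ (d + k + 1) * (d + k).factorial := Nat.mul_le_mul (by omega) ih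

/-- For each fixed `d >= 2`, `dim M_{3,psi(d,k)_{d-2}}` grows polynomially in `k` while
`(d+k)!/d!` grows superexponentially; hence there exists `K_d` such that for all `k >= K_d`
the factorial term dominates and `Phi d k = (d+k)!/d! + 1`. -/
theorem Phi_eventually_factorial (d : ℕ) (hd : 2 ≤ d) :
    ∃ K : ℕ, ∀ k : ℕ, K ≤ k →
      dimM (psi d k (d - 2)) + d + k + 1 ≤ (d + k).factorial / d.factorial + 1 ∧
        Phi d k = (d + k).factorial / d.factorial + 1 := by
  set E := (2*d+2)^(d-2) with hE
  obtain ⟨K, hK⟩ := poly_le_exp (d+2) (3*E+4)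
  refine ⟨K, fun k hk => ?_⟩
  set B := k + d + 2 with hB
  have hB4 : 4 ≤ B := by omega
  have hE1 : 1 ≤ E := Nat.one_le_pow _ _ (by omega)
  have hN : psi d k (d-2) ≤ B ^ E := psi_le d k hd (d-2)
  have hmain : dimM (psi d k (d-2)) + d + k + 1 ≤ (d+k).factorial / d.factorial := by
    have h1 : dimM (psi d k (d-2)) ≤ (psi d k (d-2) + 3)^3 := by
      unfold dimM
      exact le_trans (Nat.sub_le _ _) (choose_le_pow' _ _)
    have h2 : (psi d k (d-2) + 3)^3 ≤ (B^E * B)^3 := by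
      refine Nat.pow_le_pow_left ?_ _
      have hM : B ≤ B^E := Nat.le_self_pow (by omega) B
      have := Nat.add_le_mul (show 2 ≤ B^E by omega) (show 2 ≤ B by omega)
      omega
    have h3 : (B^E * B)^3 = B^(3*E+3) := by rw [← pow_succ, ← pow_mul]; ring_nf
    have h4 : dimM (psi d k (d-2)) + d + k + 1 ≤ B ^ (3*E+3) + B := by omega
    have h5 : B^(3*E+3) + B ≤ B^(3*E+4) := by
      have hb : B ≤ B^(3*E+3) := Nat.le_self_pow (by omega) B
      have h0 : 1 ≤ B^(3*E+3) := Nat.one_le_pow _ _ (by omega)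
      have hps : B^(3*E+4) = B^(3*E+3) * B := by rw [← pow_succ]
      have : 2 * B^(3*E+3) ≤ B^(3*E+4) := by rw [hps]; nlinarith
      omega
    have h6 : B^(3*E+4) ≤ 3^k := by
      have hBeq : B = k + (d+2) := by omega
      rw [hBeq]; exact hK k hk
    have h7 : 3^k ≤ (d+k).factorial / d.factorial := by
      rw [Nat.le_div_iff_mul_le d.factorial_pos]
      calc 3^k * d.factorial = d.factorial * 3^k := Nat.mul_comm _ _
        _ ≤ (d+k).factorial := fact_bound d hd k
    omega
  refine ⟨by omega, ?_⟩
  unfold Phi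
  exact max_eq_left (by omega)
end

section
/- With B(r) = (r−1)! + 1 (Brauer's bound) and FW as defined, lim_{r→∞} B(r)/FW(r) = ∞. More precisely, for every d there exists φ(d) such that B(r)/FW(r) ≥ d! for all r ≥ φ(d). -/
/-!
Fix `D` and let `k → ∞`. Each step of the recursion defining `ψ(D,k)_i` is bounded by a
polynomial in the previous term, so `ψ(D,k)_{D-2}`, and with it the second entry of `Φ(D,k)`,
grows polynomially in `k`, while the first entry `(D+k)!/D! ≥ k!` grows faster than any
polynomial. Hence `Φ(D,k) = (D+k)!/D! + 1` for large `k`, and taking `r = D + k + 1` gives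
`FW(r) ≤ (r-1)!/D! + 2`, so `B(r)/FW(r)` is eventually of order at least `D!`. With `D = d + 2` this beats `d!`.
-/

open Filter

section

-- Scoped, since the `Nat` notation `φ` would capture the binder `φ` of the final theorem.
open scoped Nat

def PolynomiallyBounded (f : ℕ → ℕ) : Prop :=
  ∃ e : ℕ, ∀ᶠ k in atTop, f k ≤ k ^ e

namespace PolynomiallyBounded

variable {f g : ℕ → ℕ}

theorem mono (hg : PolynomiallyBounded g) (h : ∀ k, f k ≤ g k) : PolynomiallyBounded f := by
  obtain ⟨e, he⟩ := hg
  exact ⟨e, he.mono fun k hk => (h k).trans hk⟩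

theorem id : PolynomiallyBounded fun k => k :=
  ⟨1, Eventually.of_forall fun k => (pow_one k).ge⟩

theorem const (c : ℕ) : PolynomiallyBounded fun _ => c :=
  ⟨1, (eventually_ge_atTop c).mono fun k hk => by rwa [pow_one]⟩

theorem add (hf : PolynomiallyBounded f) (hg : PolynomiallyBounded g) :
    PolynomiallyBounded fun k => f k + g k := by
  obtain ⟨a, ha⟩ := hf
  obtain ⟨b, hb⟩ := hg
  refine ⟨max a b + 1, ?_⟩
  filter_upwards [ha, hb, eventually_ge_atTop 2] with k hfk hgk hk
  have hak : k ^ a ≤ k ^ max a b := Nat.pow_le_pow_right (by omega) (le_max_left a b)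
  have hbk : k ^ b ≤ k ^ max a b := Nat.pow_le_pow_right (by omega) (le_max_right a b)
  calc f k + g k ≤ 2 * k ^ max a b := by omega
    _ ≤ k * k ^ max a b := Nat.mul_le_mul_right _ hk
    _ = k ^ (max a b + 1) := (pow_succ' k _).symm

theorem pow (hf : PolynomiallyBounded f) (n : ℕ) : PolynomiallyBounded fun k => f k ^ n := by
  obtain ⟨e, he⟩ := hf
  refine ⟨e * n, he.mono fun k hk => ?_⟩
  rw [pow_mul]
  exact Nat.pow_le_pow_left hk n

theorem eventually_le_factorial (hf : PolynomiallyBounded f) : ∀ᶠ k in atTop, f k ≤ k ! := by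
  obtain ⟨e, he⟩ := hf
  filter_upwards [he, Nat.eventually_pow_lt_factorial_sub (2 ^ e) 0] with k hfk hk
  calc f k ≤ k ^ e := hfk
    _ ≤ (2 ^ k) ^ e := Nat.pow_le_pow_left Nat.lt_two_pow_self.le e
    _ = (2 ^ e) ^ k := by rw [← pow_mul, ← pow_mul, mul_comm]
    _ ≤ k ! := hk.le

end PolynomiallyBounded

theorem psi_succ_le (D k i : ℕ) : psi D k (i + 1) ≤ (psi D k i + (D + 2)) ^ (D + 2) := by
  set p := psi D k i
  set q := p + (D + 2) with hq_def
  have hq : 2 ≤ q := by omega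
  have hqD : 1 ≤ q ^ D := Nat.one_le_pow _ _ (by omega)
  have hsq : 2 * p + 1 ≤ q ^ 2 := by nlinarith
  have hchoose : (p + (D - i)).choose p ≤ q ^ D :=
    calc (p + (D - i)).choose p = (p + (D - i)).choose (D - i) := Nat.choose_symm_add
      _ ≤ (p + (D - i)) ^ (D - i) := Nat.choose_le_pow _ _
      _ ≤ q ^ (D - i) := Nat.pow_le_pow_left (by omega) _
      _ ≤ q ^ D := Nat.pow_le_pow_right (by omega) (Nat.sub_le _ _)
  have hdiv := Nat.div_le_self ((p + (D - i)).choose p + p) (p + 1)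
  rw [psi]
  split
  · exact hsq.trans (Nat.pow_le_pow_right (by omega) (by omega))
  · rw [pow_add]
    nlinarith

theorem polynomiallyBounded_psi (D i : ℕ) : PolynomiallyBounded fun k => psi D k i := by
  induction i with
  | zero => exact PolynomiallyBounded.id
  | succ i ih =>
    exact ((ih.add (.const (D + 2))).pow (D + 2)).mono fun k => psi_succ_le D k i

theorem dimM_le (N : ℕ) : dimM N ≤ (N + 3) ^ 3 :=
  (Nat.sub_le _ _).trans (Nat.choose_le_pow _ _)

theorem factorial_le_factorial_add_div (D k : ℕ) : k ! ≤ (D + k)! / D ! := by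
  rw [← Nat.ascFactorial_eq_div, ← Nat.one_ascFactorial]
  exact Nat.ascFactorial_le k (by omega)

theorem eventually_Phi_eq (D : ℕ) : ∀ᶠ k in atTop, Phi D k = (D + k)! / D ! + 1 := by
  have hpoly : PolynomiallyBounded fun k => dimM (psi D k (D - 2)) + D + k + 1 :=
    (((((polynomiallyBounded_psi D (D - 2)).add (.const 3)).pow 3).mono fun k => dimM_le _).add
      (.const D) |>.add .id).add (.const 1)
  filter_upwards [hpoly.eventually_le_factorial] with k hk
  exact max_eq_left (hk.trans ((factorial_le_factorial_add_div D k).trans (Nat.le_succ _)))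

theorem FW_pos (r : ℕ) : 0 < FW r := by
  unfold FW
  split <;> omega

theorem FW_le_Phi_add_one {d k : ℕ} (hd : 2 ≤ d) (hk : 1 ≤ k) : FW (d + k + 1) ≤ Phi d k + 1 := by
  unfold FW
  rw [if_neg (by omega)]
  have hmem : Phi d k ∈ {m | ∃ d' k' : ℕ, 2 ≤ d' ∧ 1 ≤ k' ∧ d' + k' + 1 = d + k + 1 ∧
      m = Phi d' k'} := ⟨d, k, hd, hk, rfl, rfl⟩
  have := Nat.sInf_le hmem
  omega

theorem eventually_FW_le {D : ℕ} (hD : 2 ≤ D) : ∀ᶠ r in atTop, FW r ≤ (r - 1)! / D ! + 2 := by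
  filter_upwards [(tendsto_sub_atTop_nat (D + 1)).eventually (eventually_Phi_eq D),
    eventually_ge_atTop (D + 2)] with r hPhi hr
  have hFW := FW_le_Phi_add_one hD (show 1 ≤ r - (D + 1) by omega)
  rw [hPhi, show D + (r - (D + 1)) = r - 1 by omega] at hFW
  rwa [show r - 1 + 1 = r by omega] at hFW

theorem eventually_factorial_mul_FW_le (d : ℕ) : ∀ᶠ r in atTop, d ! * FW r ≤ (r - 1)! := by
  filter_upwards [eventually_FW_le (show 2 ≤ d + 2 by omega), eventually_ge_atTop (d + 4)]
    with r hFW hr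
  have htwo : 2 * d ! ≤ (d + 2)! := by
    rw [Nat.factorial_succ, Nat.factorial_succ, ← mul_assoc]
    exact Nat.mul_le_mul_right _ (by nlinarith)
  have hq : 2 ≤ (r - 1)! / (d + 2)! := by
    rw [Nat.le_div_iff_mul_le (Nat.factorial_pos _), mul_comm]
    calc (d + 2)! * 2 ≤ (d + 2 + 1) * (d + 2)! := by rw [mul_comm]; gcongr; omega
      _ = (d + 2 + 1)! := (Nat.factorial_succ _).symm
      _ ≤ (r - 1)! := Nat.factorial_le (by omega)
  calc d ! * FW r ≤ d ! * (2 * ((r - 1)! / (d + 2)!)) := by gcongr; omega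
    _ = 2 * d ! * ((r - 1)! / (d + 2)!) := by ring
    _ ≤ (d + 2)! * ((r - 1)! / (d + 2)!) := by gcongr
    _ ≤ (r - 1)! := Nat.mul_div_le _ _

end

/-- With `B(r) = (r-1)! + 1` (Brauer's bound), `lim_{r → ∞} B(r)/FW(r) = ∞`; more precisely,
for every `d` there exists `phi(d)` such that `B(r)/FW(r) >= d!` for all `r >= phi(d)`. -/
theorem brauer_over_FW_tendsto_atTop :
    (∀ d : ℕ, ∃ φ : ℕ, ∀ r : ℕ, φ ≤ r →
        (Nat.factorial d : ℝ) ≤ ((r - 1).factorial + 1 : ℝ) / (FW r : ℝ)) ∧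
      Filter.Tendsto (fun r : ℕ => ((r - 1).factorial + 1 : ℝ) / (FW r : ℝ))
        Filter.atTop Filter.atTop := by
  have key : ∀ d : ℕ, ∃ φ : ℕ, ∀ r : ℕ, φ ≤ r →
      (Nat.factorial d : ℝ) ≤ ((r - 1).factorial + 1 : ℝ) / (FW r : ℝ) := fun d => by
    obtain ⟨N, h⟩ := eventually_atTop.1 (eventually_factorial_mul_FW_le d)
    refine ⟨N, fun r hr => ?_⟩
    rw [le_div_iff₀ (by exact_mod_cast FW_pos r)]
    exact_mod_cast (h r hr).trans (Nat.le_succ _)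
  refine ⟨key, tendsto_atTop.2 fun b => ?_⟩
  obtain ⟨n, hn⟩ := exists_nat_ge b
  obtain ⟨N, h⟩ := key n
  filter_upwards [eventually_ge_atTop N] with r hr
  calc b ≤ n := hn
    _ ≤ (n.factorial : ℝ) := by exact_mod_cast n.self_le_factorial
    _ ≤ _ := h r hr
end

section
/- Stirling bounds: for every positive integer m, √(2π)·m^{m+1/2}·e^{1/(12m+1) − m} ≤ m! ≤ √(2π)·m^{m+1/2}·e^{1/(12m) − m}. -/
/-!
Dividing by `√(2n) (n/e)ⁿ` turns the bounds into `log √π + 1/(12n+1) ≤ log sₙ ≤ log √π + 1/(12n)`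
for Stirling's sequence `sₙ = n! / (√(2n) (n/e)ⁿ)`.
Robbins' step estimate `log sₙ - log sₙ₊₁ ≤ 1/(12n) - 1/(12(n+1))` makes `log sₙ - 1/(12n)`
increasing, while the first term of the series expansion of `log sₙ - log sₙ₊₁` bounds it below by
`1/(12n+1) - 1/(12(n+1)+1)`, making `log sₙ - 1/(12n+1)` decreasing. Both sequences tend to
`log √π` by Wallis' product, which gives the two bounds.
-/

open Real Filter Topology Stirling

theorem le_of_tendsto_of_le_succ {α : Type*} [TopologicalSpace α] [Preorder α]
    [ClosedIciTopology α] {f : ℕ → α} {k : ℕ} {a : α} (hf : ∀ n ≥ k, f n ≤ f (n + 1))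
    (h : Tendsto f atTop (𝓝 a)) : f k ≤ a :=
  ge_of_tendsto h <| eventually_atTop.2
    ⟨k, fun _ hn => monotoneOn_nat_Ici_of_le_succ hf Set.self_mem_Ici hn hn⟩

theorem ge_of_tendsto_of_succ_le {α : Type*} [TopologicalSpace α] [Preorder α]
    [ClosedIicTopology α] {f : ℕ → α} {k : ℕ} {a : α} (hf : ∀ n ≥ k, f (n + 1) ≤ f n)
    (h : Tendsto f atTop (𝓝 a)) : a ≤ f k :=
  le_of_tendsto h <| eventually_atTop.2
    ⟨k, fun _ hn => antitoneOn_nat_Ici_of_succ_le hf Set.self_mem_Ici hn hn⟩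

theorem tendsto_one_div_mul_add_atTop_nhds_zero {a : ℝ} (ha : 0 < a) (c : ℝ) :
    Tendsto (fun n : ℕ => 1 / (a * n + c)) atTop (𝓝 0) := by
  simp only [one_div]
  exact (tendsto_atTop_add_const_right _ c
    (tendsto_natCast_atTop_atTop.const_mul_atTop ha)).inv_tendsto_atTop

namespace Stirling

theorem log_stirlingSeq_tendsto : Tendsto (fun n => log (stirlingSeq n)) atTop (𝓝 (log √π)) :=
  tendsto_stirlingSeq_sqrt_pi.log (by positivity)

theorem le_log_stirlingSeq_sdiff {n : ℕ} (hn : n ≠ 0) :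
    1 / (12 * n + 1) - 1 / (12 * (n + 1) + 1) ≤
      log (stirlingSeq n) - log (stirlingSeq (n + 1)) := by
  obtain ⟨k, rfl⟩ := Nat.exists_eq_succ_of_ne_zero hn
  -- the series has nonnegative terms, and its first term `1 / (3 (2n + 1)²)` already suffices
  have first_term := le_hasSum (log_stirlingSeq_sdiff_hasSum k) 0 fun j _ => by positivity
  refine le_trans ?_ first_term
  push_cast
  rw [← sub_nonneg]
  have hk : (0 : ℝ) ≤ k := k.cast_nonneg
  field_simp
  ring_nf
  nlinarith

theorem log_sqrt_pi_add_le_log_stirlingSeq {n : ℕ} (hn : n ≠ 0) :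
    log √π + 1 / (12 * n + 1) ≤ log (stirlingSeq n) := by
  have step (k : ℕ) (hk : k ≥ n) : log (stirlingSeq (k + 1)) - 1 / (12 * ↑(k + 1) + 1) ≤
      log (stirlingSeq k) - 1 / (12 * k + 1) := by
    have := le_log_stirlingSeq_sdiff (n := k) (by omega)
    push_cast
    linarith
  have hlim : Tendsto (fun k : ℕ => log (stirlingSeq k) - 1 / (12 * k + 1)) atTop
      (𝓝 (log √π)) := by
    simpa using log_stirlingSeq_tendsto.sub
      (tendsto_one_div_mul_add_atTop_nhds_zero (by norm_num : (0 : ℝ) < 12) 1)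
  linarith [ge_of_tendsto_of_succ_le step hlim]

theorem log_stirlingSeq_le_log_sqrt_pi_add {n : ℕ} (hn : n ≠ 0) :
    log (stirlingSeq n) ≤ log √π + 1 / (12 * n) := by
  have step (k : ℕ) (hk : k ≥ n) : log (stirlingSeq k) - 1 / (12 * k) ≤
      log (stirlingSeq (k + 1)) - 1 / (12 * ↑(k + 1)) := by
    have hk0 : (k : ℝ) ≠ 0 := by exact_mod_cast (show k ≠ 0 by omega)
    have telescoping : 1 / (12 * (k : ℝ) * (k + 1)) = 1 / (12 * k) - 1 / (12 * (k + 1)) := by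
      field_simp
      ring
    have := log_stirlingSeq_sdiff_le k
    push_cast
    linarith
  have hlim : Tendsto (fun k : ℕ => log (stirlingSeq k) - 1 / (12 * k)) atTop
      (𝓝 (log √π)) := by
    simpa using log_stirlingSeq_tendsto.sub
      (tendsto_one_div_mul_add_atTop_nhds_zero (by norm_num : (0 : ℝ) < 12) 0)
  linarith [le_of_tendsto_of_le_succ step hlim]

theorem stirlingSeq_pos {n : ℕ} (hn : n ≠ 0) : 0 < stirlingSeq n :=
  lt_of_lt_of_le (by positivity) (sqrt_pi_le_stirlingSeq hn)

theorem sqrt_pi_mul_exp_le_stirlingSeq {n : ℕ} (hn : n ≠ 0) :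
    √π * exp (1 / (12 * n + 1)) ≤ stirlingSeq n := by
  rw [← exp_log (stirlingSeq_pos hn), ← exp_log (by positivity : 0 < √π), ← exp_add]
  exact exp_le_exp.2 (log_sqrt_pi_add_le_log_stirlingSeq hn)

theorem stirlingSeq_le_sqrt_pi_mul_exp {n : ℕ} (hn : n ≠ 0) :
    stirlingSeq n ≤ √π * exp (1 / (12 * n)) := by
  rw [← exp_log (stirlingSeq_pos hn), ← exp_log (by positivity : 0 < √π), ← exp_add]
  exact exp_le_exp.2 (log_stirlingSeq_le_log_sqrt_pi_add hn)

theorem factorial_eq_stirlingSeq_mul {n : ℕ} (hn : n ≠ 0) :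
    (n.factorial : ℝ) = stirlingSeq n * (√(2 * n) * (n / exp 1) ^ n) := by
  rw [stirlingSeq, div_mul_cancel₀]
  positivity

theorem sqrt_two_pi_mul_rpow_mul_exp {n : ℕ} (hn : n ≠ 0) (c : ℝ) :
    √(2 * π) * (n : ℝ) ^ ((n : ℝ) + 1 / 2) * exp (c - n) =
      √π * exp c * (√(2 * n) * (n / exp 1) ^ n) := by
  have hn0 : (0 : ℝ) < n := by positivity
  rw [rpow_add hn0, rpow_natCast, ← sqrt_eq_rpow, sqrt_mul' _ hn0.le, sqrt_mul zero_le_two,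
    exp_sub, div_pow, ← exp_nat_mul, mul_one]
  field_simp

end Stirling

/-- Robbins's sharpened Stirling bounds: for every positive integer `m`,
`√(2π)·m^{m+1/2}·e^{1/(12m+1) − m} ≤ m! ≤ √(2π)·m^{m+1/2}·e^{1/(12m) − m}`. -/
theorem stirling_bounds (m : ℕ) (hm : 0 < m) :
    Real.sqrt (2 * π) * (m : ℝ) ^ ((m : ℝ) + 1 / 2) *
        Real.exp (1 / (12 * (m : ℝ) + 1) - (m : ℝ)) ≤ (Nat.factorial m : ℝ) ∧
      (Nat.factorial m : ℝ) ≤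
        Real.sqrt (2 * π) * (m : ℝ) ^ ((m : ℝ) + 1 / 2) *
          Real.exp (1 / (12 * (m : ℝ)) - (m : ℝ)) := by
  have hm0 : m ≠ 0 := hm.ne'
  rw [sqrt_two_pi_mul_rpow_mul_exp hm0, sqrt_two_pi_mul_rpow_mul_exp hm0,
    factorial_eq_stirlingSeq_mul hm0]
  have hscale : 0 < √(2 * m) * (m / exp 1) ^ m := by positivity
  exact ⟨mul_le_mul_of_nonneg_right (sqrt_pi_mul_exp_le_stirlingSeq hm0) hscale.le,
    mul_le_mul_of_nonneg_right (stirlingSeq_le_sqrt_pi_mul_exp hm0) hscale.le⟩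
end
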